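/- Let p be an odd prime, let λ ≥ 0 be an integer, and let A, B be integers. Then the number of units a ∈ (ℤ/p^λℤ)ˣ satisfying a²·A ≡ B (mod p^λ) is at most 2·gcd(A, B, p^λ). -/

import Mathlib

/-!
Fix one solution `a₀`. Any other solution `a` satisfies `(a² - a₀²)·A ≡ 0 (mod p^λ)`, hence
`a² ≡ a₀² (mod p^λ / g)` where `g = gcd(A, p^λ)` is a power of `p`. Modulo a power of an odd prime
(a local ring in which `2` is invertible) the unit `a₀²` has only the square roots `±a₀`, and each
residue modulo `p^λ / g` has exactly `g` lifts modulo `p^λ`; so there are at most `2g` solutions.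
Finally `g` divides `B ≡ a₀²·A`, so `g ∣ gcd(A, B, p^λ)`.
-/

open Finset

theorem IsLocalRing.eq_or_eq_neg_of_sq_eq_sq {R : Type*} [CommRing R] [IsLocalRing R]
    (h2 : IsUnit (2 : R)) {x y : R} (hy : IsUnit y) (h : x ^ 2 = y ^ 2) : x = y ∨ x = -y := by
  have hsum : IsUnit ((x + y) + (y - x)) := by
    rw [show (x + y) + (y - x) = 2 * y by ring]; exact h2.mul hy
  rcases isUnit_or_isUnit_of_isUnit_add hsum with hu | hu
  · left
    have := hu.mul_left_eq_zero.1 (show (x - y) * (x + y) = 0 by linear_combination h)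
    linear_combination this
  · right
    have := hu.mul_right_eq_zero.1 (show (y - x) * (x + y) = 0 by linear_combination -h)
    linear_combination this

theorem ZMod.isLocalRing_prime_pow {p k : ℕ} (hp : p.Prime) (hk : k ≠ 0) :
    IsLocalRing (ZMod (p ^ k)) := by
  have : Fact (1 < p ^ k) := ⟨Nat.one_lt_pow hk hp.one_lt⟩
  have hunit (n : ℕ) : IsUnit (n : ZMod (p ^ k)) ↔ ¬p ∣ n :=
    ZMod.isUnit_natCast_iff_not_dvd_pow hp (Nat.pos_of_ne_zero hk)
  refine IsLocalRing.of_nonunits_add fun a b ha hb => ?_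
  rw [mem_nonunits_iff, ← ZMod.natCast_zmod_val a, hunit, not_not] at ha
  rw [mem_nonunits_iff, ← ZMod.natCast_zmod_val b, hunit, not_not] at hb
  rw [mem_nonunits_iff, ← ZMod.natCast_zmod_val a, ← ZMod.natCast_zmod_val b, ← Nat.cast_add,
    hunit, not_not]
  exact dvd_add ha hb

theorem ZMod.eq_or_eq_neg_of_sq_eq_sq_prime_pow {p : ℕ} (hp : p.Prime) (hodd : Odd p) (k : ℕ)
    {x y : ZMod (p ^ k)} (hy : IsUnit y) (h : x ^ 2 = y ^ 2) : x = y ∨ x = -y := by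
  rcases eq_or_ne k 0 with rfl | hk
  · have := ZMod.subsingleton_iff.2 (pow_zero p)
    exact .inl (Subsingleton.elim x y)
  have := ZMod.isLocalRing_prime_pow hp hk
  have h2 : IsUnit (2 : ZMod (p ^ k)) := by
    exact_mod_cast (ZMod.isUnit_iff_coprime 2 (p ^ k)).2
      ((Nat.coprime_two_left.2 hodd).pow_right k)
  exact IsLocalRing.eq_or_eq_neg_of_sq_eq_sq h2 hy h

theorem AddMonoidHom.card_filter_mem_le {G H : Type*} [AddGroup G] [Fintype G] [AddGroup H]
    [DecidableEq H] (f : G →+ H) (s : Finset H) :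
    #{x | f x ∈ s} ≤ Nat.card f.ker * #s := by
  refine card_le_mul_card_image_of_maps_to (fun x hx => (mem_filter.1 hx).2) _ fun b _ => ?_
  calc #{x ∈ {x | f x ∈ s} | f x = b} ≤ #{x | f x = b} := card_le_card fun x hx => by
        simp only [mem_filter, mem_univ, true_and] at hx ⊢; exact hx.2
    _ ≤ #{x | f x = 0} := by
        by_cases hb : b ∈ Set.range f
        · exact (AddMonoidHom.card_fiber_eq_of_mem_range f hb ⟨0, map_zero f⟩).le
        · simp only [card_eq_zero.2 (filter_eq_empty_iff.2 fun x _ hx => hb ⟨x, hx⟩), zero_le]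
    _ = Nat.card f.ker := by
        rw [← Fintype.card_subtype, ← Nat.card_eq_fintype_card]; rfl

theorem ZMod.card_ker_castHom {m n : ℕ} [NeZero n] (h : m ∣ n) :
    Nat.card (ZMod.castHom h (ZMod m)).toAddMonoidHom.ker = n / m := by
  have : NeZero m := ⟨fun hm => NeZero.ne n (Nat.eq_zero_of_zero_dvd (hm ▸ h))⟩
  set f := (ZMod.castHom h (ZMod m)).toAddMonoidHom
  have hrange : Nat.card f.range = m := by
    rw [AddMonoidHom.range_eq_top.2 (ZMod.castHom_surjective h), AddSubgroup.card_top,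
      Nat.card_zmod]
  have := f.ker.card_mul_index
  rw [AddSubgroup.index_ker, hrange, Nat.card_zmod] at this
  exact Nat.eq_div_of_mul_eq_left (NeZero.ne m) this

theorem ZMod.intCast_gcd_dvd_of_mul_eq {n : ℕ} {A B : ℤ} {x : ZMod n} (h : x * A = B) :
    (Int.gcd A n : ℤ) ∣ B := by
  have hg : Int.gcd A n ∣ n := Int.natCast_dvd_natCast.1 (Int.gcd_dvd_right A n)
  rw [← ZMod.intCast_zmod_eq_zero_iff_dvd, ← map_intCast (ZMod.castHom hg (ZMod (Int.gcd A n))),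
    ← h, map_mul, map_intCast, (ZMod.intCast_zmod_eq_zero_iff_dvd A _).2 (Int.gcd_dvd_left A n),
    mul_zero]

theorem ZMod.castHom_div_gcd_eq_zero_of_mul_eq_zero {n : ℕ} [NeZero n] {A : ℤ} {x : ZMod n}
    (h : x * A = 0) :
    ZMod.castHom (Nat.div_dvd_of_dvd (Int.natCast_dvd_natCast.1 (Int.gcd_dvd_right A n)))
      (ZMod (n / Int.gcd A n)) x = 0 := by
  obtain ⟨y, rfl⟩ := ZMod.intCast_surjective x
  set g := Int.gcd A n
  have hg : g ∣ n := Int.natCast_dvd_natCast.1 (Int.gcd_dvd_right A n)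
  have hg0 : (g : ℤ) ≠ 0 := by
    exact_mod_cast (Int.gcd_pos_of_ne_zero_right A (by exact_mod_cast NeZero.ne n)).ne'
  rw [← Int.cast_mul, ZMod.intCast_zmod_eq_zero_iff_dvd] at h
  have hgy : (n : ℤ) ∣ g * y := by
    rwa [show g = Int.gcd n A from Int.gcd_comm _ _, Int.coe_gcd, dvd_gcd_mul_iff_dvd_mul,
      mul_comm]
  rw [← Nat.div_mul_cancel hg, Nat.cast_mul, mul_comm _ (g : ℤ)] at hgy
  rw [map_intCast, ZMod.intCast_zmod_eq_zero_iff_dvd]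
  exact (mul_dvd_mul_iff_left hg0).1 hgy

theorem ZMod.card_units_sq_mul_eq_le (n : ℕ) [NeZero n] (A B : ℤ)
    (hsqrt : ∀ x y : ZMod (n / Int.gcd A n), IsUnit y → x ^ 2 = y ^ 2 → x = y ∨ x = -y) :
    Nat.card {a : (ZMod n)ˣ // (a : ZMod n) ^ 2 * A = B} ≤ 2 * Int.gcd A (Int.gcd B n) := by
  classical
  rcases isEmpty_or_nonempty {a : (ZMod n)ˣ // (a : ZMod n) ^ 2 * A = B} with _ | ⟨⟨a₀, ha₀⟩⟩
  · simp
  set g := Int.gcd A n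
  have hg : g ∣ n := Int.natCast_dvd_natCast.1 (Int.gcd_dvd_right A n)
  set π := ZMod.castHom (Nat.div_dvd_of_dvd hg) (ZMod (n / g))
  have hroots (a : (ZMod n)ˣ) (ha : (a : ZMod n) ^ 2 * A = B) :
      π a ∈ ({π a₀, -π a₀} : Finset _) := by
    have hsq : π ((a : ZMod n) ^ 2 - (a₀ : ZMod n) ^ 2) = 0 :=
      ZMod.castHom_div_gcd_eq_zero_of_mul_eq_zero (by rw [sub_mul, ha, ha₀, sub_self])
    rw [map_sub, map_pow, map_pow, sub_eq_zero] at hsq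
    simpa using hsqrt _ _ (a₀.isUnit.map π) hsq
  have hgcd : g ∣ Int.gcd A (Int.gcd B n) := Int.natCast_dvd_natCast.1 <|
    Int.dvd_coe_gcd (Int.gcd_dvd_left A n)
      (Int.dvd_coe_gcd (ZMod.intCast_gcd_dvd_of_mul_eq ha₀) (Int.gcd_dvd_right A n))
  have hgcd_pos : 0 < Int.gcd A (Int.gcd B n) :=
    Int.gcd_pos_of_ne_zero_right A (by exact_mod_cast (Int.gcd_pos_of_ne_zero_right B
      (by exact_mod_cast NeZero.ne n)).ne')
  calc Nat.card {a : (ZMod n)ˣ // (a : ZMod n) ^ 2 * A = B}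
      ≤ #{x | π x ∈ ({π a₀, -π a₀} : Finset _)} := by
        rw [← Fintype.card_subtype, ← Nat.card_eq_fintype_card]
        exact Nat.card_le_card_of_injective (fun a => ⟨a.1, hroots a.1 a.2⟩)
          fun a b h => Subtype.ext (Units.ext (congrArg Subtype.val h))
    _ ≤ Nat.card π.toAddMonoidHom.ker * 2 :=
        (π.toAddMonoidHom.card_filter_mem_le _).trans (Nat.mul_le_mul_left _ Finset.card_le_two)
    _ = g * 2 := by rw [ZMod.card_ker_castHom, Nat.div_div_self hg (NeZero.ne n)]
    _ ≤ 2 * Int.gcd A (Int.gcd B n) := by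
        rw [mul_comm]; exact Nat.mul_le_mul_left 2 (Nat.le_of_dvd hgcd_pos hgcd)

theorem count_units_square_congruence
    (p : ℕ) (hp : p.Prime) (hodd : Odd p) (lam : ℕ) (A B : ℤ) :
    Nat.card {a : (ZMod (p ^ lam))ˣ //
        ((a : ZMod (p ^ lam)) ^ 2) * (A : ZMod (p ^ lam)) = (B : ZMod (p ^ lam))}
      ≤ 2 * Int.gcd A (Int.gcd B ((p : ℤ) ^ lam)) := by
  have : NeZero (p ^ lam) := ⟨pow_ne_zero _ hp.ne_zero⟩
  obtain ⟨α, hα, hg⟩ := (Nat.dvd_prime_pow hp).1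
    (Int.natCast_dvd_natCast.1 (Int.gcd_dvd_right A (p ^ lam : ℕ)))
  have key := ZMod.card_units_sq_mul_eq_le (p ^ lam) A B (by
    rw [hg, Nat.pow_div hα hp.pos]
    exact fun x y => ZMod.eq_or_eq_neg_of_sq_eq_sq_prime_pow hp hodd _)
  rwa [Nat.cast_pow] at key
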